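/- arXiv:2410.11467 — 7 statements merged into one kernel-verified Lean document; each statement's English description precedes it below -/
import Mathlib

section
/- Let A : Y → X be given via an SVD with singular values σ_n > 0, σ_n → 0, and let T^c_α y = Σ_n (σ_n/(σ_n² + α c_n)) ⟨y, u_n⟩ v_n with weights c_n ≥ c_0 > 0. Then for every y in the domain of the pseudoinverse A† (i.e. Σ_n σ_n^{-2}|⟨y,u_n⟩|² < ∞), ‖A†y − T^c_α y‖_X → 0 as α → 0. -/
/-!
By Parseval, the squared error `‖A†y - T^c_α y‖²` is the series of the squared coefficient errors
`(σ_n⁻¹ - σ_n / (σ_n² + α c_n))² ⟨y, u_n⟩²`. Since `0 ≤ σ_n / (σ_n² + α c_n) ≤ σ_n⁻¹`, each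
term is dominated by the Picard summand `σ_n⁻² ⟨y, u_n⟩²`, and it tends to `0` as `α → 0`;
dominated convergence for series finishes the proof.
-/

open scoped RealInnerProductSpace Topology
open Filter

namespace Orthonormal

variable {ι E : Type*} [NormedAddCommGroup E] [InnerProductSpace ℝ E] [CompleteSpace E]
  {v : ι → E}

theorem summable_smul_of_summable_sq (hv : Orthonormal ℝ v) {b : ι → ℝ}
    (hb : Summable fun i => b i ^ 2) : Summable fun i => b i • v i := by
  have hnorm : Summable fun i => ‖b i‖ ^ 2 := by simpa only [Real.norm_eq_abs, sq_abs] using hb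
  simpa using (hv.orthogonalFamily.summable_iff_norm_sq_summable b).2 hnorm

theorem norm_tsum_smul_sq (hv : Orthonormal ℝ v) {b : ι → ℝ}
    (hb : Summable fun i => b i ^ 2) : ‖∑' i, b i • v i‖ ^ 2 = ∑' i, b i ^ 2 := by
  have hpartial (s : Finset ι) : ‖∑ i ∈ s, b i • v i‖ ^ 2 = ∑ i ∈ s, b i ^ 2 := by
    simpa [Real.norm_eq_abs, sq_abs] using hv.orthogonalFamily.norm_sum b s
  have hsq : HasSum (fun i => b i ^ 2) (‖∑' i, b i • v i‖ ^ 2) :=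
    (((continuous_norm.pow 2).tendsto _).comp
      (hv.summable_smul_of_summable_sq hb).hasSum).congr hpartial
  exact hsq.tsum_eq.symm

theorem tendsto_norm_tsum_smul_zero (hv : Orthonormal ℝ v) {α : Type*} {l : Filter α}
    {d : α → ι → ℝ} {B : ι → ℝ} (hB : Summable B)
    (hd : ∀ i, Tendsto (d · i) l (𝓝 0)) (hdB : ∀ᶠ t in l, ∀ i, d t i ^ 2 ≤ B i) :
    Tendsto (fun t => ‖∑' i, d t i • v i‖) l (𝓝 0) := by
  have hsq : Tendsto (fun t => ∑' i, d t i ^ 2) l (𝓝 0) := by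
    simpa using tendsto_tsum_of_dominated_convergence (f := fun t i => d t i ^ 2)
      (g := fun _ => (0 : ℝ)) hB (fun i => by simpa using (hd i).pow 2)
      (hdB.mono fun t ht i => by simpa using ht i)
  have hnorm : ∀ᶠ t in l, √(∑' i, d t i ^ 2) = ‖∑' i, d t i • v i‖ := by
    filter_upwards [hdB] with t ht
    have hsum : Summable fun i => d t i ^ 2 :=
      hB.of_nonneg_of_le (fun i => sq_nonneg _) ht
    rw [← hv.norm_tsum_smul_sq hsum, Real.sqrt_sq (norm_nonneg _)]
  simpa using hsq.sqrt.congr' hnorm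

theorem tendsto_norm_tsum_sub_tsum_smul (hv : Orthonormal ℝ v) {α : Type*} {l : Filter α}
    {a : ι → ℝ} {f : α → ι → ℝ} (ha : Summable fun i => a i ^ 2)
    (hf : ∀ i, Tendsto (f · i) l (𝓝 (a i))) (hfa : ∀ᶠ t in l, ∀ i, |f t i| ≤ |a i|) :
    Tendsto (fun t => ‖∑' i, a i • v i - ∑' i, f t i • v i‖) l (𝓝 0) := by
  have hdom : ∀ᶠ t in l, ∀ i, (a i - f t i) ^ 2 ≤ 4 * a i ^ 2 := by
    filter_upwards [hfa] with t ht i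
    have hdiff_le : |a i - f t i| ≤ 2 * |a i| := (abs_sub _ _).trans (by linarith [ht i])
    calc (a i - f t i) ^ 2 = |a i - f t i| ^ 2 := (sq_abs _).symm
      _ ≤ (2 * |a i|) ^ 2 := by gcongr
      _ = 4 * a i ^ 2 := by rw [mul_pow, sq_abs]; norm_num
  have hdiff : ∀ᶠ t in l, ∑' i, (a i - f t i) • v i = ∑' i, a i • v i - ∑' i, f t i • v i := by
    filter_upwards [hfa] with t ht
    have hft : Summable fun i => f t i ^ 2 :=
      ha.of_nonneg_of_le (fun i => sq_nonneg _) fun i => sq_le_sq.2 (ht i)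
    simp only [sub_smul]
    exact (hv.summable_smul_of_summable_sq ha).tsum_sub (hv.summable_smul_of_summable_sq hft)
  refine (hv.tendsto_norm_tsum_smul_zero (ha.mul_left 4)
    (fun i => by simpa using (hf i).const_sub (a i)) hdom).congr' ?_
  filter_upwards [hdiff] with t ht using congrArg norm ht

end Orthonormal

theorem div_sq_add_le_inv {s t : ℝ} (hs : 0 < s) (ht : 0 ≤ t) : s / (s ^ 2 + t) ≤ s⁻¹ := by
  rw [div_le_iff₀ (by positivity), inv_mul_eq_div, le_div_iff₀ hs]
  nlinarith

theorem tendsto_div_sq_add_mul {s : ℝ} (hs : s ≠ 0) (c : ℝ) :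
    Tendsto (fun α : ℝ => s / (s ^ 2 + α * c)) (𝓝 0) (𝓝 s⁻¹) := by
  have : Tendsto (fun α : ℝ => s / (s ^ 2 + α * c)) (𝓝 0) (𝓝 (s / (s ^ 2 + 0 * c))) :=
    tendsto_const_nhds.div (tendsto_const_nhds.add (tendsto_id.mul_const c)) (by simpa using hs)
  simpa [sq, div_mul_cancel_left₀ hs] using this

theorem stmt9_general
    {X Y : Type*}
    [NormedAddCommGroup X] [InnerProductSpace ℝ X] [CompleteSpace X]
    [NormedAddCommGroup Y] [InnerProductSpace ℝ Y]
    (u : ℕ → Y) (v : ℕ → X) (hv : Orthonormal ℝ v)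
    (σ : ℕ → ℝ) (hσpos : ∀ n, 0 < σ n)
    (c : ℕ → ℝ) (c₀ : ℝ) (hc₀ : 0 < c₀) (hc : ∀ n, c₀ ≤ c n)
    (y : Y)
    (hy : Summable (fun n => (σ n)⁻¹ ^ 2 * ⟪y, u n⟫ ^ 2)) :
    Filter.Tendsto
      (fun α : ℝ =>
        ‖(∑' n, ((σ n)⁻¹ * ⟪y, u n⟫) • v n) -
          ∑' n, ((σ n / ((σ n) ^ 2 + α * c n)) * ⟪y, u n⟫) • v n‖)
      (𝓝[>] (0 : ℝ)) (𝓝 0) := by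
  have hpicard : Summable fun n => ((σ n)⁻¹ * ⟪y, u n⟫) ^ 2 := by simpa only [mul_pow] using hy
  refine hv.tendsto_norm_tsum_sub_tsum_smul hpicard (fun n => ?_) ?_
  · exact ((tendsto_div_sq_add_mul (hσpos n).ne' (c n)).mono_left nhdsWithin_le_nhds).mul_const _
  · filter_upwards [self_mem_nhdsWithin] with α (hα : 0 < α) n
    have hαc : 0 ≤ α * c n := mul_nonneg hα.le (hc₀.le.trans (hc n))
    have hσ := hσpos n
    rw [abs_mul, abs_mul, abs_of_nonneg (by positivity : 0 ≤ σ n / (σ n ^ 2 + α * c n)),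
      abs_of_pos (inv_pos.2 hσ)]
    exact mul_le_mul_of_nonneg_right (div_sq_add_le_inv hσ hαc) (abs_nonneg _)

/-- for the spectral filtering operator
`T^c_α y = Σ_n (σ_n/(σ_n² + α c_n)) ⟨y, u_n⟩ v_n` with weights `c_n ≥ c_0 > 0`,
and every `y` in the domain of the pseudoinverse `A†` (Picard criterion),
`‖A†y − T^c_α y‖ → 0` as `α → 0⁺`. -/
theorem stmt9
    {X Y : Type*}
    [NormedAddCommGroup X] [InnerProductSpace ℝ X] [CompleteSpace X]
    [NormedAddCommGroup Y] [InnerProductSpace ℝ Y] [CompleteSpace Y]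
    (u : ℕ → Y) (v : ℕ → X) (hu : Orthonormal ℝ u) (hv : Orthonormal ℝ v)
    (σ : ℕ → ℝ) (hσpos : ∀ n, 0 < σ n) (hσanti : Antitone σ)
    (hσ0 : Filter.Tendsto σ Filter.atTop (nhds 0))
    (c : ℕ → ℝ) (c₀ : ℝ) (hc₀ : 0 < c₀) (hc : ∀ n, c₀ ≤ c n)
    (y : Y)
    (hy : Summable (fun n => (σ n)⁻¹ ^ 2 * ⟪y, u n⟫ ^ 2)) :
    Filter.Tendsto
      (fun α : ℝ =>
        ‖(∑' n, ((σ n)⁻¹ * ⟪y, u n⟫) • v n) -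
          ∑' n, ((σ n / ((σ n) ^ 2 + α * c n)) * ⟪y, u n⟫) • v n‖)
      (𝓝[>] (0 : ℝ)) (𝓝 0) :=
  stmt9_general u v hv σ hσpos c c₀ hc₀ hc y hy
end

section
/- Let A : X → Y be compact with SVD as above, where X = L²(M) and each v_n ∈ L^∞(M). Define U = {y ∈ Y : Σ_n σ_n^{-1}|⟨y,u_n⟩| ‖v_n‖_{L^∞} < ∞}. Then for every y ∈ U, ‖A†y‖_{L^∞(M)} ≤ Σ_n σ_n^{-1}|⟨y,u_n⟩| ‖v_n‖_{L^∞} < ∞, and ‖A†y − T^c_α y‖_{L^∞(M)} → 0 as α → 0, where T^c_α y = Σ_n (σ_n/(σ_n² + α c_n)) ⟨y, u_n⟩ v_n with weights c_n ≥ c_0 > 0. -/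
/-!
Since `|v_n| ≤ ‖v_n‖_∞` almost everywhere, simultaneously for all `n`, a coefficient sequence
dominated by `B` with `Σ B_n ‖v_n‖_∞ < ∞` gives an absolutely convergent series a.e., and the
triangle inequality bounds its `L^∞` norm by `Σ B_n ‖v_n‖_∞`. The Tikhonov weights
`σ_n / (σ_n² + α c_n)` lie in `[0, σ_n⁻¹]` and tend to `σ_n⁻¹` as `α → 0`, so the `L^∞` error
`‖A†y − T^c_α y‖_∞ ≤ Σ_n (σ_n⁻¹ − σ_n / (σ_n² + α c_n)) |⟨y, u_n⟩| ‖v_n‖_∞` tends to `0` by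
dominated convergence for series.
-/

open MeasureTheory Filter
open scoped RealInnerProductSpace Topology ENNReal

section SeriesInLInfty

variable {X : Type*} [MeasurableSpace X] {μ : Measure X} {v : ℕ → X → ℝ}

theorem ae_forall_norm_le_eLpNorm_top (hv : ∀ n, MemLp (v n) ⊤ μ) :
    ∀ᵐ x ∂μ, ∀ n, ‖v n x‖ ≤ (eLpNorm (v n) ⊤ μ).toReal := by
  refine ae_all_iff.2 fun n => ?_
  filter_upwards [enorm_ae_le_eLpNormEssSup (v n) μ] with x hx
  rw [eLpNorm_exponent_top, ← toReal_enorm]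
  exact ENNReal.toReal_mono (by simpa using (hv n).eLpNorm_ne_top) hx

theorem eLpNorm_top_tsum_mul_le (hv : ∀ n, MemLp (v n) ⊤ μ) {a B : ℕ → ℝ}
    (ha : ∀ n, |a n| ≤ B n) (hB : Summable fun n => B n * (eLpNorm (v n) ⊤ μ).toReal) :
    eLpNorm (fun x => ∑' n, a n * v n x) ⊤ μ ≤
      ENNReal.ofReal (∑' n, B n * (eLpNorm (v n) ⊤ μ).toReal) := by
  rw [eLpNorm_exponent_top]
  refine eLpNormEssSup_le_of_ae_bound ?_
  filter_upwards [ae_forall_norm_le_eLpNorm_top hv] with x hx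
  exact tsum_of_norm_bounded hB.hasSum fun n => norm_mul_le_of_le (ha n) (hx n)

theorem tsum_mul_sub_tsum_mul_ae_eq (hv : ∀ n, MemLp (v n) ⊤ μ) {a b B : ℕ → ℝ}
    (ha : ∀ n, |a n| ≤ B n) (hb : ∀ n, |b n| ≤ B n)
    (hB : Summable fun n => B n * (eLpNorm (v n) ⊤ μ).toReal) :
    (fun x => (∑' n, a n * v n x) - ∑' n, b n * v n x) =ᵐ[μ]
      fun x => ∑' n, (a n - b n) * v n x := by
  filter_upwards [ae_forall_norm_le_eLpNorm_top hv] with x hx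
  have hsummable : ∀ c : ℕ → ℝ, (∀ n, |c n| ≤ B n) → Summable fun n => c n * v n x :=
    fun c hc => hB.of_norm_bounded fun n => norm_mul_le_of_le (hc n) (hx n)
  simp_rw [sub_mul]
  exact ((hsummable a ha).tsum_sub (hsummable b hb)).symm

theorem tendsto_eLpNorm_top_tsum_mul_sub {ι : Type*} {l : Filter ι}
    (hv : ∀ n, MemLp (v n) ⊤ μ) {a : ι → ℕ → ℝ} {b B : ℕ → ℝ}
    (hB : Summable fun n => B n * (eLpNorm (v n) ⊤ μ).toReal) (hb : ∀ n, |b n| ≤ B n)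
    (ha : ∀ᶠ i in l, ∀ n, |a i n| ≤ B n) (hlim : ∀ n, Tendsto (fun i => a i n) l (𝓝 (b n))) :
    Tendsto (fun i => eLpNorm (fun x => (∑' n, b n * v n x) - ∑' n, a i n * v n x) ⊤ μ)
      l (𝓝 0) := by
  set C : ℕ → ℝ := fun n => (eLpNorm (v n) ⊤ μ).toReal
  have hdiff_le : ∀ i, (∀ n, |a i n| ≤ B n) → ∀ n, |b n - a i n| * C n ≤ 2 * (B n * C n) :=
    fun i hi n => by
      have : |b n - a i n| ≤ 2 * B n := (abs_sub _ _).trans (by linarith [hb n, hi n])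
      nlinarith [ENNReal.toReal_nonneg (a := eLpNorm (v n) ⊤ μ)]
  have hdiff_summable : ∀ i, (∀ n, |a i n| ≤ B n) → Summable fun n => |b n - a i n| * C n :=
    fun i hi => (hB.mul_left 2).of_nonneg_of_le (fun n => by positivity) (hdiff_le i hi)
  have hsum_tendsto : Tendsto (fun i => ∑' n, |b n - a i n| * C n) l (𝓝 0) := by
    have hterm : ∀ n, Tendsto (fun i => |b n - a i n| * C n) l (𝓝 0) := fun n => by
      simpa using (((tendsto_const_nhds (x := b n)).sub (hlim n)).abs.mul_const (C n))
    simpa using tendsto_tsum_of_dominated_convergence (hB.mul_left 2) hterm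
      (ha.mono fun i hi n => by
        rw [Real.norm_eq_abs, abs_of_nonneg (by positivity)]
        exact hdiff_le i hi n)
  refine tendsto_of_tendsto_of_tendsto_of_le_of_le' tendsto_const_nhds
    (by simpa using ENNReal.tendsto_ofReal hsum_tendsto) (Eventually.of_forall fun _ => zero_le)
    (ha.mono fun i hi => ?_)
  rw [eLpNorm_congr_ae (tsum_mul_sub_tsum_mul_ae_eq hv hb hi hB)]
  exact eLpNorm_top_tsum_mul_le hv (fun n => le_rfl) (hdiff_summable i hi)

end SeriesInLInfty

theorem abs_div_sq_add_mul_le_inv {s α c : ℝ} (hs : 0 < s) (hα : 0 ≤ α) (hc : 0 ≤ c) :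
    |s / (s ^ 2 + α * c)| ≤ s⁻¹ := by
  rw [abs_of_nonneg (by positivity)]
  calc s / (s ^ 2 + α * c) ≤ s / s ^ 2 :=
        div_le_div_of_nonneg_left hs.le (by positivity) (by nlinarith [mul_nonneg hα hc])
    _ = s⁻¹ := by field_simp

theorem tendsto_div_sq_add_mul_nhds_zero {s c : ℝ} (hs : s ≠ 0) :
    Tendsto (fun α : ℝ => s / (s ^ 2 + α * c)) (𝓝 0) (𝓝 s⁻¹) := by
  have h : s⁻¹ = s / (s ^ 2 + 0 * c) := by rw [zero_mul, add_zero]; field_simp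
  rw [h]
  exact ContinuousAt.tendsto (by fun_prop (disch := simpa using hs))

theorem stmt10_general
    {M : Type*} [MeasureSpace M]
    {Y : Type*} [NormedAddCommGroup Y] [InnerProductSpace ℝ Y]
    (u : ℕ → Y)
    (v : ℕ → M → ℝ)
    (hvinf : ∀ n, MemLp (v n) ⊤ volume)
    (σ : ℕ → ℝ) (hσpos : ∀ n, 0 < σ n)
    (c : ℕ → ℝ) (c₀ : ℝ) (hc₀ : 0 < c₀) (hc : ∀ n, c₀ ≤ c n)
    (y : Y)
    (hyU : Summable
      (fun n => (σ n)⁻¹ * |⟪y, u n⟫| * (eLpNorm (v n) ⊤ volume).toReal)) :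
    eLpNorm (fun x => ∑' n, (σ n)⁻¹ * ⟪y, u n⟫ * v n x) ⊤ volume ≤
      ENNReal.ofReal
        (∑' n, (σ n)⁻¹ * |⟪y, u n⟫| * (eLpNorm (v n) ⊤ volume).toReal) ∧
    Filter.Tendsto
      (fun α : ℝ =>
        eLpNorm
          (fun x =>
            (∑' n, (σ n)⁻¹ * ⟪y, u n⟫ * v n x) -
              ∑' n, (σ n / ((σ n) ^ 2 + α * c n)) * ⟪y, u n⟫ * v n x) ⊤ volume)
      (𝓝[>] (0 : ℝ)) (𝓝 0) := by
  have hcoef : ∀ n, |(σ n)⁻¹ * ⟪y, u n⟫| ≤ (σ n)⁻¹ * |⟪y, u n⟫| := fun n => by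
    rw [abs_mul, abs_inv, abs_of_pos (hσpos n)]
  refine ⟨eLpNorm_top_tsum_mul_le hvinf hcoef hyU,
    tendsto_eLpNorm_top_tsum_mul_sub hvinf hyU hcoef ?_ fun n => ?_⟩
  · filter_upwards [self_mem_nhdsWithin] with α (hα : 0 < α) n
    rw [abs_mul]
    exact mul_le_mul_of_nonneg_right
      (abs_div_sq_add_mul_le_inv (hσpos n) hα.le (hc₀.le.trans (hc n))) (abs_nonneg _)
  · exact ((tendsto_div_sq_add_mul_nhds_zero (hσpos n).ne').mono_left
      nhdsWithin_le_nhds).mul_const _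

/-- with `X = L²(M)`, singular vectors `v_n ∈ L²(M) ∩ L^∞(M)`, and
`U = {y : Σ_n σ_n⁻¹ |⟨y,u_n⟩| ‖v_n‖_∞ < ∞}`, for every `y ∈ U` the pseudoinverse
`A†y = Σ_n σ_n⁻¹⟨y,u_n⟩v_n` satisfies `‖A†y‖_{L^∞} ≤ Σ_n σ_n⁻¹|⟨y,u_n⟩|‖v_n‖_∞`, and
`‖A†y − T^c_α y‖_{L^∞} → 0` as `α → 0⁺`, where
`T^c_α y = Σ_n (σ_n/(σ_n²+αc_n))⟨y,u_n⟩v_n` with weights `c_n ≥ c_0 > 0`. -/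
theorem stmt10
    {M : Type*} [MeasureSpace M]
    {Y : Type*} [NormedAddCommGroup Y] [InnerProductSpace ℝ Y] [CompleteSpace Y]
    (u : ℕ → Y) (hu : Orthonormal ℝ u)
    (v : ℕ → M → ℝ)
    (hv2 : ∀ n, MemLp (v n) 2 volume) (hvinf : ∀ n, MemLp (v n) ⊤ volume)
    (hvON : ∀ n m, ∫ x, v n x * v m x = if n = m then (1 : ℝ) else 0)
    (σ : ℕ → ℝ) (hσpos : ∀ n, 0 < σ n) (hσanti : Antitone σ)
    (hσ0 : Filter.Tendsto σ Filter.atTop (nhds 0))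
    (c : ℕ → ℝ) (c₀ : ℝ) (hc₀ : 0 < c₀) (hc : ∀ n, c₀ ≤ c n)
    (y : Y)
    (hyU : Summable
      (fun n => (σ n)⁻¹ * |⟪y, u n⟫| * (eLpNorm (v n) ⊤ volume).toReal)) :
    eLpNorm (fun x => ∑' n, (σ n)⁻¹ * ⟪y, u n⟫ * v n x) ⊤ volume ≤
      ENNReal.ofReal
        (∑' n, (σ n)⁻¹ * |⟪y, u n⟫| * (eLpNorm (v n) ⊤ volume).toReal) ∧
    Filter.Tendsto
      (fun α : ℝ =>
        eLpNorm
          (fun x =>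
            (∑' n, (σ n)⁻¹ * ⟪y, u n⟫ * v n x) -
              ∑' n, (σ n / ((σ n) ^ 2 + α * c n)) * ⟪y, u n⟫ * v n x) ⊤ volume)
      (𝓝[>] (0 : ℝ)) (𝓝 0) :=
  stmt10_general u v hvinf σ hσpos c c₀ hc₀ hc y hyU
end

section
/- Let A be compact with SVD having singular values σ_n → 0, suppose the weights satisfy c_n ≤ C σ_n^{-β} for all n (C, β > 0), and let y ∈ V_{η+2β} for some η > 0 (i.e., Σ_n σ_n^{-(2+η+2β)}|⟨y,u_n⟩|² < ∞). Then there exists C' > 0 (depending on C, β, η, σ_1, y) such that ‖A†y − T^c_α y‖_X ≤ C' α^{min{1, η/4}} for all α > 0. -/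
open scoped RealInnerProductSpace

lemma aux_summable {X : Type*} [NormedAddCommGroup X] [InnerProductSpace ℝ X]
    [CompleteSpace X] {v : ℕ → X} (hv : Orthonormal ℝ v) {b : ℕ → ℝ}
    (hb : Summable (fun n => b n ^ 2)) : Summable (fun n => b n • v n) := by
  have h := (hv.orthogonalFamily.summable_iff_norm_sq_summable (fun n => b n)).2
  simp only [LinearIsometry.toSpanSingleton_apply, Real.norm_eq_abs, sq_abs] at h
  exact h hb

lemma aux_norm {X : Type*} [NormedAddCommGroup X] [InnerProductSpace ℝ X]
    [CompleteSpace X] {v : ℕ → X} (hv : Orthonormal ℝ v) (b w : ℕ → ℝ) (M : ℝ) (hM : 0 ≤ M)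
    (hbw : ∀ n, |b n| ≤ M * w n) (hw : Summable (fun n => w n ^ 2)) :
    ‖∑' n, (b n) • v n‖ ≤ M * Real.sqrt (∑' n, w n ^ 2) := by
  have hb2 : ∀ n, b n ^ 2 ≤ M ^ 2 * w n ^ 2 := by
    intro n
    calc b n ^ 2 = |b n| ^ 2 := (sq_abs _).symm
    _ ≤ (M * w n) ^ 2 := by
        apply pow_le_pow_left₀ (abs_nonneg _) (hbw n)
    _ = M ^ 2 * w n ^ 2 := by ring
  have hb : Summable (fun n => b n ^ 2) :=
    Summable.of_nonneg_of_le (fun n => sq_nonneg _) hb2 (hw.mul_left _)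
  have hs : Summable (fun n => b n • v n) := aux_summable hv hb
  have ht := hs.hasSum
  refine le_of_tendsto ht.norm (Filter.Eventually.of_forall (fun F => ?_))
  have h1 : ‖∑ n ∈ F, b n • v n‖ ^ 2 = ∑ n ∈ F, b n ^ 2 := by
    have := hv.orthogonalFamily.norm_sum (fun n => b n) F
    simpa only [LinearIsometry.toSpanSingleton_apply, Real.norm_eq_abs, sq_abs] using this
  have h2 : ∑ n ∈ F, b n ^ 2 ≤ M ^ 2 * ∑' n, w n ^ 2 := by
    calc ∑ n ∈ F, b n ^ 2 ≤ ∑ n ∈ F, M ^ 2 * w n ^ 2 :=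
          Finset.sum_le_sum (fun n _ => hb2 n)
    _ = M ^ 2 * ∑ n ∈ F, w n ^ 2 := by rw [Finset.mul_sum]
    _ ≤ M ^ 2 * ∑' n, w n ^ 2 := by
        apply mul_le_mul_of_nonneg_left _ (sq_nonneg M)
        exact Summable.sum_le_tsum F (fun n _ => sq_nonneg _) hw
  calc ‖∑ n ∈ F, b n • v n‖ = Real.sqrt (‖∑ n ∈ F, b n • v n‖ ^ 2) :=
        (Real.sqrt_sq (norm_nonneg _)).symm
  _ ≤ Real.sqrt (M ^ 2 * ∑' n, w n ^ 2) := Real.sqrt_le_sqrt (h1 ▸ h2)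
  _ = M * Real.sqrt (∑' n, w n ^ 2) := by
      rw [Real.sqrt_mul (sq_nonneg M), Real.sqrt_sq hM]

/-- weighted geometric mean bound: `x^θ * y^(1-θ) ≤ x + y`. -/
lemma aux_gm {x y θ : ℝ} (hx : 0 ≤ x) (hy : 0 ≤ y) (hθ0 : 0 ≤ θ) (hθ1 : θ ≤ 1) :
    x ^ θ * y ^ (1 - θ) ≤ x + y := by
  have hM : 0 ≤ max x y := le_trans hx (le_max_left _ _)
  have h1 : x ^ θ ≤ (max x y) ^ θ :=
    Real.rpow_le_rpow hx (le_max_left _ _) hθ0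
  have h2 : y ^ (1 - θ) ≤ (max x y) ^ (1 - θ) :=
    Real.rpow_le_rpow hy (le_max_right _ _) (by linarith)
  calc x ^ θ * y ^ (1 - θ) ≤ (max x y) ^ θ * (max x y) ^ (1 - θ) :=
        mul_le_mul h1 h2 (Real.rpow_nonneg hy _) (Real.rpow_nonneg hM _)
  _ = (max x y) ^ (θ + (1 - θ)) := (Real.rpow_add_of_nonneg hM hθ0 (by linarith)).symm
  _ = max x y := by norm_num
  _ ≤ x + y := max_le (le_add_of_nonneg_right hy) (le_add_of_nonneg_left hx)

/-- if the weights satisfy `c_n ≤ C σ_n^{-β}` and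
`y ∈ V_{η+2β}` (i.e. `Σ_n σ_n^{-(2+η+2β)} |⟨y,u_n⟩|² < ∞`), then
`‖A†y − T^c_α y‖ ≤ C' α^{min{1, η/4}}` for all `α > 0`, for some `C' > 0`. -/
theorem stmt13
    {X Y : Type*}
    [NormedAddCommGroup X] [InnerProductSpace ℝ X] [CompleteSpace X]
    [NormedAddCommGroup Y] [InnerProductSpace ℝ Y] [CompleteSpace Y]
    (u : ℕ → Y) (v : ℕ → X) (hu : Orthonormal ℝ u) (hv : Orthonormal ℝ v)
    (σ : ℕ → ℝ) (hσpos : ∀ n, 0 < σ n) (hσanti : Antitone σ)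
    (hσ0 : Filter.Tendsto σ Filter.atTop (nhds 0))
    (c : ℕ → ℝ) (c₀ : ℝ) (hc₀ : 0 < c₀) (hc : ∀ n, c₀ ≤ c n)
    (C β : ℝ) (hC : 0 < C) (hβ : 0 < β)
    (hcβ : ∀ n, c n ≤ C * σ n ^ (-β))
    (η : ℝ) (hη : 0 < η)
    (y : Y)
    (hy : Summable (fun n => |⟪y, u n⟫| ^ 2 / σ n ^ (2 + η + 2 * β))) :
    ∃ C' : ℝ, 0 < C' ∧ ∀ α : ℝ, 0 < α →
      ‖(∑' n, ((σ n)⁻¹ * ⟪y, u n⟫) • v n) -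
          ∑' n, ((σ n / ((σ n) ^ 2 + α * c n)) * ⟪y, u n⟫) • v n‖ ≤
        C' * α ^ (min 1 (η / 4)) := by
  set μ : ℝ := min 1 (η / 4) with hμdef
  have hμpos : 0 < μ := lt_min one_pos (by positivity)
  have hμ1 : μ ≤ 1 := min_le_left _ _
  have hμη : μ ≤ η / 4 := min_le_right _ _
  set e : ℝ := 1 + η / 2 + β with hedef
  set a : ℕ → ℝ := fun n => ⟪y, u n⟫ with hadef
  set w : ℕ → ℝ := fun n => |a n| / σ n ^ e with hwdef
  have hσ0pos := hσpos 0
  -- w squared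
  have hw2 : ∀ n, w n ^ 2 = |a n| ^ 2 / σ n ^ (2 + η + 2 * β) := by
    intro n
    have h1 : (σ n ^ e) ^ (2 : ℕ) = σ n ^ (2 + η + 2 * β) := by
      rw [← Real.rpow_natCast (σ n ^ e) 2, ← Real.rpow_mul (hσpos n).le]
      norm_num [hedef]; ring_nf
    simp only [hwdef, div_pow, h1]
  have hwsum : Summable (fun n => w n ^ 2) := hy.congr (fun n => (hw2 n).symm)
  -- the constant
  set K : ℝ := C * c₀ ^ (μ - 1) * σ 0 ^ (η / 2 - 2 * μ) with hKdef
  have hK : 0 < K := by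
    have := Real.rpow_pos_of_pos hc₀ (μ - 1)
    have := Real.rpow_pos_of_pos hσ0pos (η / 2 - 2 * μ)
    positivity
  set S : ℝ := Real.sqrt (∑' n, w n ^ 2) with hSdef
  refine ⟨K * S + 1, by positivity, ?_⟩
  intro α hα
  -- summability of the two coefficient sequences
  have hp2 : ∀ n, ((σ n)⁻¹ * a n) ^ 2 =
      (|a n| ^ 2 / σ n ^ (2 + η + 2 * β)) * σ n ^ (η + 2 * β) := by
    intro n
    have hσn := hσpos n
    have hr : σ n ^ (η + 2 * β) / σ n ^ (2 + η + 2 * β) = ((σ n) ^ 2)⁻¹ := by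
      rw [← Real.rpow_sub hσn,
        show (η + 2 * β) - (2 + η + 2 * β) = -(2 : ℝ) by ring,
        Real.rpow_neg hσn.le,
        show (2 : ℝ) = ((2 : ℕ) : ℝ) by norm_num, Real.rpow_natCast]
    calc ((σ n)⁻¹ * a n) ^ 2 = a n ^ 2 * ((σ n) ^ 2)⁻¹ := by
          rw [mul_pow, inv_pow]; ring
      _ = |a n| ^ 2 * (σ n ^ (η + 2 * β) / σ n ^ (2 + η + 2 * β)) := by
          rw [sq_abs, hr]
      _ = (|a n| ^ 2 / σ n ^ (2 + η + 2 * β)) * σ n ^ (η + 2 * β) := by ring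
  have hp : Summable (fun n => ((σ n)⁻¹ * a n) ^ 2) := by
    apply Summable.of_nonneg_of_le (fun n => sq_nonneg _) _
      (hy.mul_right (σ 0 ^ (η + 2 * β)))
    intro n
    have hσn := hσpos n
    rw [hp2 n]
    apply mul_le_mul_of_nonneg_left _ (by positivity)
    exact Real.rpow_le_rpow hσn.le (hσanti (Nat.zero_le n)) (by positivity)
  have hden : ∀ n, 0 < σ n ^ 2 + α * c n := by
    intro n
    have hcn : 0 < c n := lt_of_lt_of_le hc₀ (hc n)
    have hσn := hσpos n
    positivity
  have hfilter : ∀ n, 0 ≤ σ n / (σ n ^ 2 + α * c n) ∧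
      σ n / (σ n ^ 2 + α * c n) ≤ (σ n)⁻¹ := by
    intro n
    constructor
    · exact div_nonneg (hσpos n).le (hden n).le
    · have hcn : 0 < c n := lt_of_lt_of_le hc₀ (hc n)
      have h1 : σ n / (σ n ^ 2 + α * c n) ≤ σ n / σ n ^ 2 := by
        apply div_le_div_of_nonneg_left (hσpos n).le (pow_pos (hσpos n) 2)
        nlinarith [mul_pos hα hcn]
      have h2 : σ n / σ n ^ 2 = (σ n)⁻¹ := by
        rw [sq]
        field_simp
      linarith [h1, h2.le, h2.ge]
  have hq : Summable (fun n => (σ n / (σ n ^ 2 + α * c n) * a n) ^ 2) := by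
    apply Summable.of_nonneg_of_le (fun n => sq_nonneg _) _ hp
    intro n
    rw [mul_pow, mul_pow]
    apply mul_le_mul_of_nonneg_right _ (sq_nonneg _)
    exact pow_le_pow_left₀ (hfilter n).1 (hfilter n).2 2
  have hps : Summable (fun n => ((σ n)⁻¹ * a n) • v n) := aux_summable hv hp
  have hqs : Summable (fun n => (σ n / (σ n ^ 2 + α * c n) * a n) • v n) :=
    aux_summable hv hq
  -- rewrite the difference as a single tsum
  have hdiff : (∑' n, ((σ n)⁻¹ * a n) • v n) -
      (∑' n, (σ n / (σ n ^ 2 + α * c n) * a n) • v n) =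
      ∑' n, (((σ n)⁻¹ - σ n / (σ n ^ 2 + α * c n)) * a n) • v n := by
    rw [← Summable.tsum_sub hps hqs]
    exact tsum_congr (fun n => by rw [← sub_smul, ← sub_mul])
  -- pointwise bound on the filter difference
  have hDle : ∀ n, (σ n)⁻¹ - σ n / (σ n ^ 2 + α * c n) ≤ K * α ^ μ * (σ n ^ e)⁻¹ := by
    intro n
    have hσn := hσpos n
    have hcn : 0 < c n := lt_of_lt_of_le hc₀ (hc n)
    have hD : (σ n)⁻¹ - σ n / (σ n ^ 2 + α * c n) =
        α * c n / (σ n * (σ n ^ 2 + α * c n)) := by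
      field_simp
      ring
    have hAM : (σ n ^ 2) ^ μ * (α * c₀) ^ (1 - μ) ≤ σ n ^ 2 + α * c n := by
      calc (σ n ^ 2) ^ μ * (α * c₀) ^ (1 - μ) ≤ σ n ^ 2 + α * c₀ :=
            aux_gm (sq_nonneg _) (by positivity) hμpos.le hμ1
      _ ≤ σ n ^ 2 + α * c n := by nlinarith [hc n]
    have hAMpos : 0 < (σ n ^ 2) ^ μ * (α * c₀) ^ (1 - μ) := by
      have := Real.rpow_pos_of_pos (by positivity : (0:ℝ) < σ n ^ 2) μ
      have := Real.rpow_pos_of_pos (by positivity : (0:ℝ) < α * c₀) (1 - μ)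
      positivity
    have step1 : α * c n / (σ n * (σ n ^ 2 + α * c n)) ≤
        α * (C * σ n ^ (-β)) / (σ n * ((σ n ^ 2) ^ μ * (α * c₀) ^ (1 - μ))) := by
      have hnum : α * c n ≤ α * (C * σ n ^ (-β)) :=
        mul_le_mul_of_nonneg_left (hcβ n) hα.le
      have hden2 : σ n * ((σ n ^ 2) ^ μ * (α * c₀) ^ (1 - μ)) ≤
          σ n * (σ n ^ 2 + α * c n) := mul_le_mul_of_nonneg_left hAM hσn.le
      exact div_le_div₀ (by positivity) hnum (by positivity) hden2
    have step2 : α * (C * σ n ^ (-β)) / (σ n * ((σ n ^ 2) ^ μ * (α * c₀) ^ (1 - μ))) =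
        C * c₀ ^ (μ - 1) * α ^ μ * σ n ^ (-β - 1 - 2 * μ) := by
      rw [Real.mul_rpow hα.le hc₀.le]
      have h2 : (σ n ^ 2 : ℝ) ^ μ = σ n ^ (2 * μ) := by
        rw [← Real.rpow_natCast (σ n) 2, ← Real.rpow_mul hσn.le]
        norm_num
      rw [h2]
      have hασ : α ^ (1 - μ) ≠ 0 := (Real.rpow_pos_of_pos hα _).ne'
      have hcσ : c₀ ^ (1 - μ) ≠ 0 := (Real.rpow_pos_of_pos hc₀ _).ne'
      rw [div_eq_iff (by positivity)]
      have e1 : α ^ μ * α ^ (1 - μ) = α := by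
        rw [← Real.rpow_add hα]; norm_num
      have e2 : c₀ ^ (μ - 1) * c₀ ^ (1 - μ) = 1 := by
        rw [← Real.rpow_add hc₀]; norm_num
      have e3 : σ n ^ (-β - 1 - 2 * μ) * (σ n * σ n ^ (2 * μ)) = σ n ^ (-β) := by
        nth_rewrite 2 [show σ n = σ n ^ (1:ℝ) from (Real.rpow_one _).symm]
        rw [← Real.rpow_add hσn, ← Real.rpow_add hσn]
        ring_nf
      calc α * (C * σ n ^ (-β))
          = C * (c₀ ^ (μ - 1) * c₀ ^ (1 - μ)) * (α ^ μ * α ^ (1 - μ)) * σ n ^ (-β) := by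
            rw [e1, e2]; ring
        _ = C * c₀ ^ (μ - 1) * α ^ μ * (σ n ^ (-β - 1 - 2 * μ) * (σ n * σ n ^ (2 * μ)))
              * (α ^ (1 - μ) * c₀ ^ (1 - μ)) := by rw [e3]; ring
        _ = C * c₀ ^ (μ - 1) * α ^ μ * σ n ^ (-β - 1 - 2 * μ)
              * (σ n * (σ n ^ (2 * μ) * (α ^ (1 - μ) * c₀ ^ (1 - μ)))) := by ring
    have step3 : C * c₀ ^ (μ - 1) * α ^ μ * σ n ^ (-β - 1 - 2 * μ) ≤
        K * α ^ μ * (σ n ^ e)⁻¹ := by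
      have h4 : σ n ^ (-β - 1 - 2 * μ) = σ n ^ (η / 2 - 2 * μ) * (σ n ^ e)⁻¹ := by
        rw [← Real.rpow_neg hσn.le, ← Real.rpow_add hσn]
        congr 1
        simp only [hedef]; ring
      rw [h4, hKdef]
      have h5 : σ n ^ (η / 2 - 2 * μ) ≤ σ 0 ^ (η / 2 - 2 * μ) :=
        Real.rpow_le_rpow hσn.le (hσanti (Nat.zero_le n)) (by linarith)
      have h6 : 0 < (σ n ^ e)⁻¹ := by positivity
      calc C * c₀ ^ (μ - 1) * α ^ μ * (σ n ^ (η / 2 - 2 * μ) * (σ n ^ e)⁻¹)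
          ≤ C * c₀ ^ (μ - 1) * α ^ μ * (σ 0 ^ (η / 2 - 2 * μ) * (σ n ^ e)⁻¹) := by
            apply mul_le_mul_of_nonneg_left _ (by positivity)
            exact mul_le_mul_of_nonneg_right h5 h6.le
        _ = C * c₀ ^ (μ - 1) * σ 0 ^ (η / 2 - 2 * μ) * α ^ μ * (σ n ^ e)⁻¹ := by ring
    calc (σ n)⁻¹ - σ n / (σ n ^ 2 + α * c n)
        = α * c n / (σ n * (σ n ^ 2 + α * c n)) := hD
      _ ≤ α * (C * σ n ^ (-β)) / (σ n * ((σ n ^ 2) ^ μ * (α * c₀) ^ (1 - μ))) := step1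
      _ = C * c₀ ^ (μ - 1) * α ^ μ * σ n ^ (-β - 1 - 2 * μ) := step2
      _ ≤ K * α ^ μ * (σ n ^ e)⁻¹ := step3
  -- pointwise bound on the coefficients
  have hbw : ∀ n, |((σ n)⁻¹ - σ n / (σ n ^ 2 + α * c n)) * a n| ≤ (K * α ^ μ) * w n := by
    intro n
    have hDnn : 0 ≤ (σ n)⁻¹ - σ n / (σ n ^ 2 + α * c n) := by
      linarith [(hfilter n).2]
    rw [abs_mul, abs_of_nonneg hDnn]
    calc ((σ n)⁻¹ - σ n / (σ n ^ 2 + α * c n)) * |a n|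
        ≤ K * α ^ μ * (σ n ^ e)⁻¹ * |a n| :=
          mul_le_mul_of_nonneg_right (hDle n) (abs_nonneg _)
      _ = (K * α ^ μ) * w n := by
          simp only [hwdef, div_eq_mul_inv]; ring
  -- conclude
  rw [hdiff]
  have hbound := aux_norm hv _ w (K * α ^ μ) (by positivity) hbw hwsum
  calc ‖∑' n, (((σ n)⁻¹ - σ n / (σ n ^ 2 + α * c n)) * a n) • v n‖
      ≤ K * α ^ μ * S := hbound
    _ = K * S * α ^ μ := by ring
    _ ≤ (K * S + 1) * α ^ μ := by
        have : 0 < α ^ μ := Real.rpow_pos_of_pos hα μ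
        nlinarith
end

section
/- Let A : L²(M) → Y be compact with Σ_n σ_n^η ‖v_n‖²_{L^∞(M)} < ∞ for some η > 0, and suppose c_n ≤ C σ_n^{-β} for all n (C, β > 0). If y ∈ V_{2η+2β}, then there is C' > 0 with ‖A†y − T^c_α y‖_{L^∞(M)} ≤ C' α^{min{1, η/4}} for all α > 0. -/
/-!
Write `a n = ⟪y, u n⟫` and `K n = ‖v n‖_∞`. The error coefficient of the filter is
`σ⁻¹ - σ / (σ² + α c) = σ⁻¹ · α c / (α c + σ²)`, and `x / (x + s) ≤ (x / s) ^ t` for `t ∈ [0, 1]`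
together with `c ≤ C σ^(-β)` bounds it by `(C α)^t σ^(-(1 + (2 + β) t))`, with `t = min 1 (η/4)`.
Splitting `|a n| K n σ n^(-(1 + (2 + β) t))` into `|a n| σ n^(-(1 + η + β))`, which is in `ℓ²`
because `y ∈ V_{2η+2β}`, times `σ n^(η/2) K n` (in `ℓ²` by the growth condition) times a power of
`σ n` whose exponent is nonnegative since `4 t ≤ η` and `t ≤ 1`, Cauchy–Schwarz bounds the error
series uniformly in `x`.
-/

open MeasureTheory
open scoped RealInnerProductSpace ENNReal

lemma div_add_le_div_rpow {x s t : ℝ} (hx : 0 < x) (hs : 0 < s) (ht0 : 0 ≤ t) (ht1 : t ≤ 1) :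
    x / (x + s) ≤ (x / s) ^ t := by
  rcases le_total (x / s) 1 with h | h
  · calc x / (x + s) ≤ x / s := by gcongr; linarith
      _ = (x / s) ^ (1 : ℝ) := (Real.rpow_one _).symm
      _ ≤ (x / s) ^ t := Real.rpow_le_rpow_of_exponent_ge (by positivity) h ht1
  · calc x / (x + s) ≤ 1 := (div_le_one (by positivity)).2 (by linarith)
      _ ≤ (x / s) ^ t := Real.one_le_rpow h ht0

lemma div_sq_add_mul_le_inv {σ α c : ℝ} (hσ : 0 < σ) (hαc : 0 ≤ α * c) :
    σ / (σ ^ 2 + α * c) ≤ σ⁻¹ :=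
  calc σ / (σ ^ 2 + α * c) ≤ σ / σ ^ 2 := by gcongr; linarith
    _ = σ⁻¹ := by field_simp

lemma inv_sub_div_sq_add_mul_le {σ α c C β t : ℝ} (hσ : 0 < σ) (hα : 0 < α) (hc : 0 < c)
    (hcβ : c ≤ C * σ ^ (-β)) (ht0 : 0 ≤ t) (ht1 : t ≤ 1) :
    σ⁻¹ - σ / (σ ^ 2 + α * c) ≤ (C * α) ^ t * σ ^ (-(1 + (2 + β) * t)) := by
  have hαc : 0 < α * c := by positivity
  have hratio : α * c / σ ^ 2 ≤ C * α * σ ^ (-(2 + β)) := by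
    rw [div_le_iff₀ (by positivity), neg_add, Real.rpow_add hσ, Real.rpow_neg hσ.le,
      Real.rpow_two]
    calc α * c ≤ α * (C * σ ^ (-β)) := by gcongr
      _ = C * α * ((σ ^ 2)⁻¹ * σ ^ (-β)) * σ ^ 2 := by field_simp
  calc σ⁻¹ - σ / (σ ^ 2 + α * c) = σ⁻¹ * (α * c / (α * c + σ ^ 2)) := by field_simp; ring
    _ ≤ σ⁻¹ * (α * c / σ ^ 2) ^ t := by
      gcongr; exact div_add_le_div_rpow hαc (by positivity) ht0 ht1
    _ ≤ σ⁻¹ * (C * α * σ ^ (-(2 + β))) ^ t := by gcongr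
    _ = (C * α) ^ t * σ ^ (-(1 + (2 + β) * t)) := by
      have hC : 0 < C := pos_of_mul_pos_left (hc.trans_le hcβ) (by positivity)
      rw [Real.mul_rpow (by positivity) (by positivity), ← Real.rpow_mul hσ.le,
        ← Real.rpow_neg_one, show -(1 + (2 + β) * t) = -1 + -(2 + β) * t by ring,
        Real.rpow_add hσ]
      ring

lemma summable_abs_mul_mul_rpow_neg {σ a K : ℕ → ℝ} {B p q s : ℝ} (hσ : ∀ n, 0 < σ n)
    (hσB : ∀ n, σ n ≤ B) (hK : ∀ n, 0 ≤ K n) (hspq : 2 * s + q ≤ p)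
    (ha : Summable fun n => |a n| ^ 2 / σ n ^ p) (hKq : Summable fun n => σ n ^ q * K n ^ 2) :
    Summable fun n => |a n| * K n * σ n ^ (-s) := by
  refine Summable.of_nonneg_of_le (fun n => by have := hσ n; have := hK n; positivity)
    (fun n => ?_) ((ha.add hKq).mul_left (B ^ ((p - q) / 2 - s) / 2))
  have hσn := hσ n
  set x := |a n| * σ n ^ (-(p / 2)) with hx
  set y := σ n ^ (q / 2) * K n with hy
  have hxy : 0 ≤ x * y := by have := hK n; rw [hx, hy]; positivity
  have hsplit : |a n| * K n * σ n ^ (-s) = σ n ^ ((p - q) / 2 - s) * (x * y) := by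
    rw [show -s = ((p - q) / 2 - s) + -(p / 2) + q / 2 by ring, Real.rpow_add hσn,
      Real.rpow_add hσn]
    ring
  have hx2 : x ^ 2 = |a n| ^ 2 / σ n ^ p := by
    rw [mul_pow, ← Real.rpow_mul_natCast hσn.le, show -(p / 2) * ((2 : ℕ) : ℝ) = -p by
      push_cast; ring, Real.rpow_neg hσn.le, div_eq_mul_inv]
  have hy2 : y ^ 2 = σ n ^ q * K n ^ 2 := by
    rw [mul_pow, ← Real.rpow_mul_natCast hσn.le, show q / 2 * ((2 : ℕ) : ℝ) = q by
      push_cast; ring]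
  calc |a n| * K n * σ n ^ (-s) = σ n ^ ((p - q) / 2 - s) * (x * y) := hsplit
    _ ≤ B ^ ((p - q) / 2 - s) * ((x ^ 2 + y ^ 2) / 2) := by
      refine mul_le_mul (Real.rpow_le_rpow hσn.le (hσB n) (by linarith))
        (by linarith [two_mul_le_add_sq x y]) hxy (Real.rpow_nonneg (hσn.le.trans (hσB n)) _)
    _ = B ^ ((p - q) / 2 - s) / 2 * (|a n| ^ 2 / σ n ^ p + σ n ^ q * K n ^ 2) := by
      rw [hx2, hy2]; ring

lemma MeasureTheory.MemLp.ae_norm_le_eLpNorm_top_toReal {α E : Type*} [MeasurableSpace α]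
    {μ : Measure α} [NormedAddCommGroup E] {f : α → E} (hf : MemLp f ⊤ μ) :
    ∀ᵐ x ∂μ, ‖f x‖ ≤ (eLpNorm f ⊤ μ).toReal := by
  filter_upwards [enorm_ae_le_eLpNormEssSup f μ] with x hx
  rw [eLpNorm_exponent_top]
  exact (ENNReal.toReal_le_toReal enorm_ne_top (by simpa using hf.2.ne)).2 hx

lemma abs_tsum_inv_mul_sub_tsum_div_mul_le {σ a w K c : ℕ → ℝ} {α C β t : ℝ}
    (hσ : ∀ n, 0 < σ n) (hα : 0 < α) (hc : ∀ n, 0 < c n) (hcβ : ∀ n, c n ≤ C * σ n ^ (-β))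
    (ht0 : 0 ≤ t) (ht1 : t ≤ 1) (hw : ∀ n, |w n| ≤ K n)
    (hsum₁ : Summable fun n => |a n| * K n * σ n ^ (-1 : ℝ))
    (hsum : Summable fun n => |a n| * K n * σ n ^ (-(1 + (2 + β) * t))) :
    |(∑' n, (σ n)⁻¹ * a n * w n) - ∑' n, σ n / (σ n ^ 2 + α * c n) * a n * w n|
      ≤ (C * α) ^ t * ∑' n, |a n| * K n * σ n ^ (-(1 + (2 + β) * t)) := by
  have hterm : ∀ n k, ‖k * a n * w n‖ ≤ |k| * (|a n| * K n) := fun n k => by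
    rw [Real.norm_eq_abs, abs_mul, abs_mul, mul_assoc]
    exact mul_le_mul_of_nonneg_left (mul_le_mul_of_nonneg_left (hw n) (abs_nonneg _))
      (abs_nonneg _)
  have hfilter : ∀ n, σ n / (σ n ^ 2 + α * c n) ≤ (σ n)⁻¹ := fun n =>
    div_sq_add_mul_le_inv (hσ n) (mul_pos hα (hc n)).le
  have hsummable : ∀ k : ℕ → ℝ, (∀ n, 0 ≤ k n ∧ k n ≤ (σ n)⁻¹) →
      Summable fun n => k n * a n * w n := fun k hk =>
    hsum₁.of_norm_bounded fun n => (hterm n (k n)).trans <| by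
      rw [abs_of_nonneg (hk n).1, Real.rpow_neg_one, mul_comm _ (σ n)⁻¹]
      exact mul_le_mul_of_nonneg_right (hk n).2
        (mul_nonneg (abs_nonneg _) ((abs_nonneg _).trans (hw n)))
  rw [← (hsummable _ fun n => ⟨(inv_pos.2 (hσ n)).le, le_rfl⟩).tsum_sub
    (hsummable _ fun n => ⟨by have := hσ n; have := hc n; positivity, hfilter n⟩)]
  simp only [← sub_mul]
  refine tsum_of_norm_bounded (hsum.hasSum.mul_left ((C * α) ^ t)) fun n => (hterm n _).trans ?_
  rw [abs_of_nonneg (sub_nonneg.2 (hfilter n))]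
  calc _ ≤ (C * α) ^ t * σ n ^ (-(1 + (2 + β) * t)) * (|a n| * K n) :=
        mul_le_mul_of_nonneg_right (inv_sub_div_sq_add_mul_le (hσ n) hα (hc n) (hcβ n) ht0 ht1)
          (mul_nonneg (abs_nonneg _) ((abs_nonneg _).trans (hw n)))
    _ = _ := by ring

theorem stmt15_general
    {M : Type*} [MeasureSpace M]
    {Y : Type*} [NormedAddCommGroup Y] [InnerProductSpace ℝ Y]
    (u : ℕ → Y)
    (v : ℕ → M → ℝ)
    (hvinf : ∀ n, MemLp (v n) ⊤ volume)
    (σ : ℕ → ℝ) (hσpos : ∀ n, 0 < σ n) (hσanti : Antitone σ)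
    (η : ℝ) (hη : 0 < η)
    (hgrowth : Summable (fun n => σ n ^ η * (eLpNorm (v n) ⊤ volume).toReal ^ 2))
    (c : ℕ → ℝ) (c₀ : ℝ) (hc₀ : 0 < c₀) (hc : ∀ n, c₀ ≤ c n)
    (C β : ℝ) (hC : 0 < C) (hβ : 0 < β)
    (hcβ : ∀ n, c n ≤ C * σ n ^ (-β))
    (y : Y)
    (hy : Summable (fun n => |⟪y, u n⟫| ^ 2 / σ n ^ (2 + 2 * η + 2 * β))) :
    ∃ C' : ℝ, 0 < C' ∧ ∀ α : ℝ, 0 < α →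
      eLpNorm
        (fun x =>
          (∑' n, (σ n)⁻¹ * ⟪y, u n⟫ * v n x) -
            ∑' n, (σ n / ((σ n) ^ 2 + α * c n)) * ⟪y, u n⟫ * v n x) ⊤ volume ≤
        ENNReal.ofReal (C' * α ^ (min 1 (η / 4))) := by
  set t := min 1 (η / 4)
  set K : ℕ → ℝ := fun n => (eLpNorm (v n) ⊤ volume).toReal
  have ht0 : 0 ≤ t := le_min zero_le_one (by positivity)
  have ht1 : t ≤ 1 := min_le_left _ _
  have hσB : ∀ n, σ n ≤ σ 0 := fun n => hσanti (Nat.zero_le n)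
  have hK : ∀ n, 0 ≤ K n := fun n => ENNReal.toReal_nonneg
  have hsum₁ := summable_abs_mul_mul_rpow_neg (s := 1) hσpos hσB hK (by linarith) hy hgrowth
  have hsum := summable_abs_mul_mul_rpow_neg (s := 1 + (2 + β) * t) hσpos hσB hK
    (by nlinarith [min_le_right 1 (η / 4), mul_le_mul_of_nonneg_left ht1 hβ.le]) hy hgrowth
  set S := ∑' n, |⟪y, u n⟫| * K n * σ n ^ (-(1 + (2 + β) * t))
  have hS : 0 ≤ S := tsum_nonneg fun n => by have := hσpos n; have := hK n; positivity
  refine ⟨C ^ t * S + 1, by positivity, fun α hα => ?_⟩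
  rw [eLpNorm_exponent_top]
  refine eLpNormEssSup_le_of_ae_bound ?_
  filter_upwards [ae_all_iff.2 fun n => (hvinf n).ae_norm_le_eLpNorm_top_toReal] with x hx
  calc _ ≤ (C * α) ^ t * S := abs_tsum_inv_mul_sub_tsum_div_mul_le hσpos hα
        (fun n => hc₀.trans_le (hc n)) hcβ ht0 ht1 hx hsum₁ hsum
    _ ≤ (C ^ t * S + 1) * α ^ t := by
      rw [Real.mul_rpow hC.le hα.le]; nlinarith [Real.rpow_pos_of_pos hα t]

/-- if `Σ_n σ_n^η ‖v_n‖²_{L^∞(M)} < ∞` for some `η > 0`,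
`c_n ≤ C σ_n^{-β}` (`C, β > 0`), and `y ∈ V_{2η+2β}`, then there is `C' > 0` with
`‖A†y − T^c_α y‖_{L^∞(M)} ≤ C' α^{min{1, η/4}}` for all `α > 0`. -/
theorem stmt15
    {M : Type*} [MeasureSpace M]
    {Y : Type*} [NormedAddCommGroup Y] [InnerProductSpace ℝ Y] [CompleteSpace Y]
    (u : ℕ → Y) (hu : Orthonormal ℝ u)
    (v : ℕ → M → ℝ)
    (hv2 : ∀ n, MemLp (v n) 2 volume) (hvinf : ∀ n, MemLp (v n) ⊤ volume)
    (hvON : ∀ n m, ∫ x, v n x * v m x = if n = m then (1 : ℝ) else 0)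
    (σ : ℕ → ℝ) (hσpos : ∀ n, 0 < σ n) (hσanti : Antitone σ)
    (hσ0 : Filter.Tendsto σ Filter.atTop (nhds 0))
    (η : ℝ) (hη : 0 < η)
    (hgrowth : Summable (fun n => σ n ^ η * (eLpNorm (v n) ⊤ volume).toReal ^ 2))
    (c : ℕ → ℝ) (c₀ : ℝ) (hc₀ : 0 < c₀) (hc : ∀ n, c₀ ≤ c n)
    (C β : ℝ) (hC : 0 < C) (hβ : 0 < β)
    (hcβ : ∀ n, c n ≤ C * σ n ^ (-β))
    (y : Y)
    (hy : Summable (fun n => |⟪y, u n⟫| ^ 2 / σ n ^ (2 + 2 * η + 2 * β))) :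
    ∃ C' : ℝ, 0 < C' ∧ ∀ α : ℝ, 0 < α →
      eLpNorm
        (fun x =>
          (∑' n, (σ n)⁻¹ * ⟪y, u n⟫ * v n x) -
            ∑' n, (σ n / ((σ n) ^ 2 + α * c n)) * ⟪y, u n⟫ * v n x) ⊤ volume ≤
        ENNReal.ofReal (C' * α ^ (min 1 (η / 4))) :=
  stmt15_general u v hvinf σ hσpos hσanti η hη hgrowth c c₀ hc₀ hc C β hC hβ hcβ y hy
end

section
/- Let A : L²(M) → Y be compact with v_n ∈ L^∞(M) and Σ_n σ_n^η ‖v_n‖²_{L^∞} < ∞ for some η ∈ (0,2]. Then for any weights c_n ≥ c_0 > 0, the operator T^c_α : Y → L^∞(M) is bounded with ‖T^c_α‖_{Y→L^∞} ≤ (σ_1^{1−η/2}/(α c_0)) · ‖(σ_n^{η/2}‖v_n‖_∞)_n‖_{ℓ²}. -/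
open MeasureTheory
open scoped RealInnerProductSpace ENNReal

/-!
Each coefficient of `T^c_α` satisfies `σ_n / (σ_n² + α c_n) ≤ σ_n / (α c₀)`, and interpolating
`σ_n = σ_n^{1-η/2} σ_n^{η/2} ≤ σ_0^{1-η/2} σ_n^{η/2}` against the largest singular value `σ_0`
moves the decay `σ_n^{η/2}` onto `‖v_n‖_∞`.
Bounding `v_n` pointwise by its essential supremum, the series is dominated almost everywhere by
`Σ |⟨y, u_n⟩| σ_n^{η/2} ‖v_n‖_∞`, which Cauchy–Schwarz and Bessel's inequality bound by
`‖y‖ ‖(σ_n^{η/2} ‖v_n‖_∞)_n‖_{ℓ²}`.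
-/

lemma div_sq_add_le_rpow_div_mul_rpow {s s₀ a a₀ θ : ℝ} (hs : 0 < s) (hs₀ : s ≤ s₀)
    (hθ : θ ≤ 1) (ha₀ : 0 < a₀) (ha : a₀ ≤ a) :
    s / (s ^ 2 + a) ≤ s₀ ^ (1 - θ) / a₀ * s ^ θ :=
  calc s / (s ^ 2 + a) ≤ s / a₀ := div_le_div_of_nonneg_left hs.le ha₀ (by nlinarith)
    _ = s ^ (1 - θ) * s ^ θ / a₀ := by rw [← Real.rpow_add hs]; simp
    _ ≤ s₀ ^ (1 - θ) * s ^ θ / a₀ := by gcongr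
    _ = s₀ ^ (1 - θ) / a₀ * s ^ θ := by ring

theorem Orthonormal.summable_and_tsum_norm_inner_mul_le {ι E : Type*} [NormedAddCommGroup E]
    [InnerProductSpace ℝ E] {u : ι → E} (hu : Orthonormal ℝ u) (y : E) {w : ι → ℝ}
    (hw : ∀ i, 0 ≤ w i) (hw2 : Summable fun i => w i ^ 2) :
    Summable (fun i => ‖⟪u i, y⟫‖ * w i) ∧
      ∑' i, ‖⟪u i, y⟫‖ * w i ≤ ‖y‖ * √(∑' i, w i ^ 2) := by
  have hpq : (2 : ℝ).HolderConjugate 2 := .two_two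
  have hy2 : Summable fun i => ‖⟪u i, y⟫‖ ^ (2 : ℝ) := by
    simpa only [Real.rpow_two] using hu.inner_products_summable y
  have hw2' : Summable fun i => w i ^ (2 : ℝ) := by simpa only [Real.rpow_two] using hw2
  refine ⟨Real.summable_mul_of_Lp_Lq_of_nonneg hpq (fun _ => norm_nonneg _) hw hy2 hw2', ?_⟩
  have hbessel : √(∑' i, ‖⟪u i, y⟫‖ ^ 2) ≤ ‖y‖ :=
    (Real.sqrt_le_sqrt (hu.tsum_inner_products_le y)).trans_eq (Real.sqrt_sq (norm_nonneg y))
  calc ∑' i, ‖⟪u i, y⟫‖ * w i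
      ≤ √(∑' i, ‖⟪u i, y⟫‖ ^ 2) * √(∑' i, w i ^ 2) := by
        rw [Real.sqrt_eq_rpow, Real.sqrt_eq_rpow]
        simpa only [Real.rpow_two] using
          Real.inner_le_Lp_mul_Lq_tsum_of_nonneg hpq (fun _ => norm_nonneg _) hw hy2 hw2'
    _ ≤ ‖y‖ * √(∑' i, w i ^ 2) := by gcongr

theorem eLpNorm_top_tsum_le {α E ι : Type*} [MeasurableSpace α] {μ : Measure α}
    [NormedAddCommGroup E] [Countable ι] {f : ι → α → E} {b : ι → ℝ}
    (hf : ∀ i, ∀ᵐ x ∂μ, ‖f i x‖ ≤ b i) (hb : Summable b) :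
    eLpNorm (fun x => ∑' i, f i x) ⊤ μ ≤ ENNReal.ofReal (∑' i, b i) := by
  rw [eLpNorm_exponent_top]
  refine eLpNormEssSup_le_of_ae_bound ?_
  filter_upwards [ae_all_iff.2 hf] with x hx
  exact tsum_of_norm_bounded hb.hasSum hx

theorem stmt16_general
    {M : Type*} [MeasureSpace M]
    {Y : Type*} [NormedAddCommGroup Y] [InnerProductSpace ℝ Y]
    (u : ℕ → Y) (hu : Orthonormal ℝ u)
    (v : ℕ → M → ℝ)
    (hvinf : ∀ n, MemLp (v n) ⊤ volume)
    (σ : ℕ → ℝ) (hσpos : ∀ n, 0 < σ n) (hσanti : Antitone σ)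
    (η : ℝ) (hη2 : η ≤ 2)
    (hgrowth : Summable (fun n => σ n ^ η * (eLpNorm (v n) ⊤ volume).toReal ^ 2))
    (c : ℕ → ℝ) (c₀ : ℝ) (hc₀ : 0 < c₀) (hc : ∀ n, c₀ ≤ c n)
    (α : ℝ) (hα : 0 < α) :
    ∀ y : Y,
      eLpNorm (fun x => ∑' n, (σ n / ((σ n) ^ 2 + α * c n)) * ⟪y, u n⟫ * v n x)
          ⊤ volume ≤
        ENNReal.ofReal
          ((σ 0 ^ (1 - η / 2) / (α * c₀)) *
            Real.sqrt (∑' n, σ n ^ η * (eLpNorm (v n) ⊤ volume).toReal ^ 2) *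
            ‖y‖) := by
  intro y
  set C := σ 0 ^ (1 - η / 2) / (α * c₀)
  have hC : 0 ≤ C := by positivity [(hσpos 0).le]
  set w : ℕ → ℝ := fun n => σ n ^ (η / 2) * (eLpNorm (v n) ⊤ volume).toReal
  have hw_sq : ∀ n, w n ^ 2 = σ n ^ η * (eLpNorm (v n) ⊤ volume).toReal ^ 2 := fun n => by
    rw [mul_pow, ← Real.rpow_mul_natCast (hσpos n).le]; norm_num
  have hw : ∀ n, 0 ≤ w n := fun n => by positivity [(hσpos n).le]
  obtain ⟨hsum, hle⟩ := hu.summable_and_tsum_norm_inner_mul_le y hw (by simpa only [hw_sq])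
  have hterm : ∀ n, ∀ᵐ x, ‖σ n / (σ n ^ 2 + α * c n) * ⟪y, u n⟫ * v n x‖ ≤
      C * (‖⟪u n, y⟫‖ * w n) := fun n => by
    filter_upwards [ae_le_lpNorm_exponent_top (hvinf n)] with x hx
    rw [← toReal_eLpNorm (hvinf n).1] at hx
    have hcoef := div_sq_add_le_rpow_div_mul_rpow (hσpos n) (hσanti (Nat.zero_le n))
      (by linarith : η / 2 ≤ 1) (by positivity) (mul_le_mul_of_nonneg_left (hc n) hα.le)
    have hden : 0 < σ n ^ 2 + α * c n := by nlinarith [hσpos n, hc n]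
    rw [norm_mul, norm_mul, real_inner_comm, Real.norm_of_nonneg (div_nonneg (hσpos n).le hden.le)]
    calc _ ≤ C * σ n ^ (η / 2) * ‖⟪u n, y⟫‖ * (eLpNorm (v n) ⊤ volume).toReal := by
          gcongr
          exact mul_nonneg (mul_nonneg hC (Real.rpow_nonneg (hσpos n).le _)) (norm_nonneg _)
      _ = C * (‖⟪u n, y⟫‖ * w n) := by ring
  calc _ ≤ ENNReal.ofReal (∑' n, C * (‖⟪u n, y⟫‖ * w n)) :=
        eLpNorm_top_tsum_le hterm (hsum.mul_left C)
    _ ≤ _ := by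
      rw [tsum_mul_left, mul_assoc, mul_comm (√_), ← tsum_congr hw_sq]
      gcongr

/-- if `v_n ∈ L^∞(M)` and `Σ_n σ_n^η ‖v_n‖²_{L^∞} < ∞` for some
`η ∈ (0,2]`, then for any weights `c_n ≥ c_0 > 0` the operator
`T^c_α : Y → L^∞(M)` is bounded with
`‖T^c_α y‖_{L^∞} ≤ (σ_1^{1−η/2}/(α c_0)) ‖(σ_n^{η/2}‖v_n‖_∞)_n‖_{ℓ²} ‖y‖`. -/
theorem stmt16
    {M : Type*} [MeasureSpace M]
    {Y : Type*} [NormedAddCommGroup Y] [InnerProductSpace ℝ Y] [CompleteSpace Y]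
    (u : ℕ → Y) (hu : Orthonormal ℝ u)
    (v : ℕ → M → ℝ)
    (hv2 : ∀ n, MemLp (v n) 2 volume) (hvinf : ∀ n, MemLp (v n) ⊤ volume)
    (hvON : ∀ n m, ∫ x, v n x * v m x = if n = m then (1 : ℝ) else 0)
    (σ : ℕ → ℝ) (hσpos : ∀ n, 0 < σ n) (hσanti : Antitone σ)
    (hσ0 : Filter.Tendsto σ Filter.atTop (nhds 0))
    (η : ℝ) (hη : 0 < η) (hη2 : η ≤ 2)
    (hgrowth : Summable (fun n => σ n ^ η * (eLpNorm (v n) ⊤ volume).toReal ^ 2))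
    (c : ℕ → ℝ) (c₀ : ℝ) (hc₀ : 0 < c₀) (hc : ∀ n, c₀ ≤ c n)
    (α : ℝ) (hα : 0 < α) :
    ∀ y : Y,
      eLpNorm (fun x => ∑' n, (σ n / ((σ n) ^ 2 + α * c n)) * ⟪y, u n⟫ * v n x)
          ⊤ volume ≤
        ENNReal.ofReal
          ((σ 0 ^ (1 - η / 2) / (α * c₀)) *
            Real.sqrt (∑' n, σ n ^ η * (eLpNorm (v n) ⊤ volume).toReal ^ 2) *
            ‖y‖) :=
  stmt16_general u hu v hvinf σ hσpos hσanti η hη2 hgrowth c c₀ hc₀ hc α hα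
end

section
/- Let A : L²(M) → Y be compact with v_n ∈ L^∞(M) and Σ_n σ_n^η ‖v_n‖²_{L^∞} < ∞ for some η > 2. If c_n ≥ C σ_n^{1−η/2} for all n with some C > 0, then T^c_α : Y → L^∞(M) is bounded with ‖T^c_α‖_{Y→L^∞} ≤ (1/(αC)) · ‖(σ_n^{η/2}‖v_n‖_∞)_n‖_{ℓ²}. -/
open MeasureTheory
open scoped RealInnerProductSpace ENNReal

/-!
The `n`-th coefficient of `T^c_α y` is `σ_n / (σ_n² + α c_n) · ⟪y, u_n⟫`. Since
`σ_n² + α c_n ≥ α C σ_n^{1-η/2}`, its modulus is at most `σ_n^{η/2} |⟪y, u_n⟫| / (α C)`. Bounding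
`|v_n|` by `‖v_n‖_∞` almost everywhere, the series is dominated by
`(α C)⁻¹ Σ_n σ_n^{η/2} ‖v_n‖_∞ |⟪y, u_n⟫|`, and Cauchy–Schwarz together with Bessel's inequality
bounds this sum by `(α C)⁻¹ ‖(σ_n^{η/2} ‖v_n‖_∞)_n‖_{ℓ²} ‖y‖`.
-/

theorem abs_div_sq_add_mul_le_rpow_div {σ α C c η : ℝ} (hσ : 0 < σ) (hα : 0 < α) (hC : 0 < C)
    (hc : C * σ ^ (1 - η / 2) ≤ c) :
    |σ / (σ ^ 2 + α * c)| ≤ σ ^ (η / 2) / (α * C) := by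
  have hlower : α * C * σ ^ (1 - η / 2) ≤ σ ^ 2 + α * c := by
    nlinarith [mul_le_mul_of_nonneg_left hc hα.le, sq_nonneg σ]
  have hpos : 0 < α * C * σ ^ (1 - η / 2) := by positivity
  have hsplit : σ ^ (η / 2) * σ ^ (1 - η / 2) = σ := by
    rw [← Real.rpow_add hσ]; norm_num
  rw [abs_of_nonneg (div_nonneg hσ.le (hpos.le.trans hlower))]
  calc σ / (σ ^ 2 + α * c) ≤ σ / (α * C * σ ^ (1 - η / 2)) :=
        div_le_div_of_nonneg_left hσ.le hpos hlower
    _ = σ ^ (η / 2) / (α * C) := by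
        rw [div_eq_div_iff hpos.ne' (by positivity)]
        linear_combination (-(α * C)) * hsplit

theorem Orthonormal.summable_and_tsum_mul_norm_inner_le {ι E : Type*} [NormedAddCommGroup E]
    [InnerProductSpace ℝ E] {u : ι → E} (hu : Orthonormal ℝ u) (y : E) {f : ι → ℝ}
    (hf : ∀ i, 0 ≤ f i) (hf2 : Summable fun i => f i ^ 2) :
    Summable (fun i => f i * ‖⟪u i, y⟫‖) ∧
      ∑' i, f i * ‖⟪u i, y⟫‖ ≤ √(∑' i, f i ^ 2) * ‖y‖ := by
  have hholder := Real.summable_and_inner_le_Lp_mul_Lq_tsum_of_nonneg .two_two hf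
    (fun i => norm_nonneg ⟪u i, y⟫) (by simpa only [Real.rpow_two] using hf2)
    (by simpa only [Real.rpow_two] using hu.inner_products_summable y)
  simp only [Real.rpow_two, ← Real.sqrt_eq_rpow] at hholder
  refine ⟨hholder.1, hholder.2.trans ?_⟩
  gcongr
  simpa only [Real.sqrt_sq (norm_nonneg y)] using Real.sqrt_le_sqrt (hu.tsum_inner_products_le y)

theorem eLpNorm_top_tsum_le_of_ae_norm_le {X ι E : Type*} [MeasurableSpace X] {μ : Measure X}
    [NormedAddCommGroup E] {g : ι → X → E} {a : ι → ℝ} (ha : Summable a)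
    (hg : ∀ᵐ x ∂μ, ∀ i, ‖g i x‖ ≤ a i) :
    eLpNorm (fun x => ∑' i, g i x) ∞ μ ≤ ENNReal.ofReal (∑' i, a i) := by
  rw [eLpNorm_exponent_top]
  refine eLpNormEssSup_le_of_ae_bound ?_
  filter_upwards [hg] with x hx using tsum_of_norm_bounded ha.hasSum hx

theorem stmt17_general
    {M : Type*} [MeasureSpace M]
    {Y : Type*} [NormedAddCommGroup Y] [InnerProductSpace ℝ Y]
    (u : ℕ → Y) (hu : Orthonormal ℝ u)
    (v : ℕ → M → ℝ)
    (hvinf : ∀ n, MemLp (v n) ⊤ volume)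
    (σ : ℕ → ℝ) (hσpos : ∀ n, 0 < σ n)
    (η : ℝ)
    (hgrowth : Summable (fun n => σ n ^ η * (eLpNorm (v n) ⊤ volume).toReal ^ 2))
    (c : ℕ → ℝ) (C : ℝ) (hC : 0 < C) (hc : ∀ n, C * σ n ^ (1 - η / 2) ≤ c n)
    (α : ℝ) (hα : 0 < α) :
    ∀ y : Y,
      eLpNorm (fun x => ∑' n, (σ n / ((σ n) ^ 2 + α * c n)) * ⟪y, u n⟫ * v n x)
          ⊤ volume ≤
        ENNReal.ofReal
          ((1 / (α * C)) *
            Real.sqrt (∑' n, σ n ^ η * (eLpNorm (v n) ⊤ volume).toReal ^ 2) *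
            ‖y‖) := by
  intro y
  set N : ℕ → ℝ := fun n => (eLpNorm (v n) ⊤ volume).toReal
  set f : ℕ → ℝ := fun n => σ n ^ (η / 2) * N n
  have hf2 : (fun n => f n ^ 2) = fun n => σ n ^ η * N n ^ 2 := by
    ext n
    rw [mul_pow, ← Real.rpow_mul_natCast (hσpos n).le]
    norm_num
  obtain ⟨hsum, hCS⟩ := hu.summable_and_tsum_mul_norm_inner_le y
    (fun n => mul_nonneg (Real.rpow_nonneg (hσpos n).le _) ENNReal.toReal_nonneg)
    (hf2 ▸ hgrowth)
  have hvN : ∀ᵐ x, ∀ n, ‖v n x‖ ≤ N n := ae_all_iff.2 fun n => by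
    simpa only [N, toReal_eLpNorm (hvinf n).1] using ae_le_lpNorm_exponent_top (hvinf n)
  refine (eLpNorm_top_tsum_le_of_ae_norm_le (hsum.mul_left (1 / (α * C))) ?_).trans
    (ENNReal.ofReal_le_ofReal ?_)
  · filter_upwards [hvN] with x hx n
    rw [norm_mul, norm_mul, Real.norm_eq_abs, real_inner_comm]
    calc |σ n / (σ n ^ 2 + α * c n)| * ‖⟪u n, y⟫‖ * ‖v n x‖
        ≤ σ n ^ (η / 2) / (α * C) * ‖⟪u n, y⟫‖ * N n := by
          have hcoeff := abs_div_sq_add_mul_le_rpow_div (hσpos n) hα hC (hc n)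
          have hbound_nonneg := (abs_nonneg _).trans hcoeff
          gcongr
          exact hx n
      _ = 1 / (α * C) * (f n * ‖⟪u n, y⟫‖) := by ring
  · rw [tsum_mul_left, mul_assoc, ← hf2]
    gcongr

/-- if `v_n ∈ L^∞(M)` and `Σ_n σ_n^η ‖v_n‖²_{L^∞} < ∞` for some
`η > 2`, then for any weights `c_n ≥ C σ_n^{1−η/2}` (`C > 0`) the operator
`T^c_α : Y → L^∞(M)` is bounded with
`‖T^c_α y‖_{L^∞} ≤ (1/(α C)) ‖(σ_n^{η/2}‖v_n‖_∞)_n‖_{ℓ²} ‖y‖`. -/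
theorem stmt17
    {M : Type*} [MeasureSpace M]
    {Y : Type*} [NormedAddCommGroup Y] [InnerProductSpace ℝ Y] [CompleteSpace Y]
    (u : ℕ → Y) (hu : Orthonormal ℝ u)
    (v : ℕ → M → ℝ)
    (hv2 : ∀ n, MemLp (v n) 2 volume) (hvinf : ∀ n, MemLp (v n) ⊤ volume)
    (hvON : ∀ n m, ∫ x, v n x * v m x = if n = m then (1 : ℝ) else 0)
    (σ : ℕ → ℝ) (hσpos : ∀ n, 0 < σ n) (hσanti : Antitone σ)
    (hσ0 : Filter.Tendsto σ Filter.atTop (nhds 0))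
    (η : ℝ) (hη : 0 < η) (hη2 : 2 < η)
    (hgrowth : Summable (fun n => σ n ^ η * (eLpNorm (v n) ⊤ volume).toReal ^ 2))
    (c : ℕ → ℝ) (C : ℝ) (hC : 0 < C) (hc : ∀ n, C * σ n ^ (1 - η / 2) ≤ c n)
    (α : ℝ) (hα : 0 < α) :
    ∀ y : Y,
      eLpNorm (fun x => ∑' n, (σ n / ((σ n) ^ 2 + α * c n)) * ⟪y, u n⟫ * v n x)
          ⊤ volume ≤
        ENNReal.ofReal
          ((1 / (α * C)) *
            Real.sqrt (∑' n, σ n ^ η * (eLpNorm (v n) ⊤ volume).toReal ^ 2) *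
            ‖y‖) :=
  stmt17_general u hu v hvinf σ hσpos η hgrowth c C hC hc α hα
end

section
/- Let k ∈ L¹(𝕋)\L²(𝕋) be a convolution kernel on the circle whose Fourier coefficients satisfy |k̂[n]| ≥ (|n|+1)^{-ρ} for all n ∈ ℤ, with 0 < ρ < 1/2, and let T^{Tikh}_α be the Tikhonov regularizer of the convolution operator Ax = k*x on L²(𝕋) (diagonal in the Fourier basis). Then the functions r_N = Σ_{|n|≤N} (|n|+1)^{−(1−ρ)} u_n (where u_n are the left singular vectors) are uniformly bounded in L²(𝕋), while (T^{Tikh}_α r_N)(0) ≥ (σ_max² + α)^{-1} Σ_{|n|≤N} (|n|+1)^{-1} → ∞ as N → ∞. Hence T^{Tikh}_α is not bounded from L²(𝕋) to L^∞(𝕋). -/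
open MeasureTheory AddCircle
open scoped ENNReal

/-!
The coefficients `(|n|+1)^{-(1-ρ)}` of `r_N` are square-summable because `1 - ρ > 1/2`, so the
`r_N` are bounded in `L²`. The reconstruction `g_N` is a trigonometric polynomial whose value at
`0` is a sum of positive terms, and `σ/(σ²+α) ≥ (|n|+1)^{-ρ}/(σ_max²+α)` turns the `n`-th term
into at least `(σ_max²+α)⁻¹ (|n|+1)⁻¹`; hence `g_N(0)` dominates a divergent harmonic sum. Since
Haar measure charges every nonempty open set, the `L^∞` norm of a continuous function bounds all
its point values, so `‖g_N‖_∞ → ∞` while `‖r_N‖₂` stays bounded.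
-/

open Filter

theorem Orthonormal.norm_sum_ofReal_smul_le {𝕜 E ι : Type*} [RCLike 𝕜] [NormedAddCommGroup E]
    [InnerProductSpace 𝕜 E] {v : ι → E} (hv : Orthonormal 𝕜 v) {c : ι → ℝ}
    (hc : Summable fun i => c i ^ 2) (s : Finset ι) :
    ‖∑ i ∈ s, (c i : 𝕜) • v i‖ ≤ √(∑' i, c i ^ 2) := by
  have hsq : ‖∑ i ∈ s, (c i : 𝕜) • v i‖ ^ 2 = ∑ i ∈ s, c i ^ 2 := by
    simpa using hv.orthogonalFamily.norm_sum (fun i => (c i : 𝕜)) s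
  rw [← Real.sqrt_sq (norm_nonneg _), hsq]
  exact Real.sqrt_le_sqrt (hc.sum_le_tsum s fun i _ => sq_nonneg _)

theorem summable_abs_add_one_rpow_neg_sq {t : ℝ} (ht : 1 / 2 < t) :
    Summable fun n : ℤ => (((|n| : ℝ) + 1) ^ (-t)) ^ 2 := by
  have hnat : Summable fun i : ℕ => ((i : ℝ) + 1) ^ (-(2 * t)) := by
    simpa using (summable_nat_add_iff 1).2
      (Real.summable_nat_rpow.2 (by linarith : -(2 * t) < -1))
  have hsq : ∀ n : ℤ, (((|n| : ℝ) + 1) ^ (-t)) ^ 2 = ((|n| : ℝ) + 1) ^ (-(2 * t)) := fun n => by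
    rw [← Real.rpow_natCast, ← Real.rpow_mul (by positivity)]
    ring_nf
  simp_rw [hsq]
  exact .of_nat_of_neg (by simpa using hnat) (by simpa using hnat)

theorem tendsto_sum_Icc_inv_abs_add_one_atTop :
    Tendsto (fun N : ℕ => ∑ n ∈ Finset.Icc (-(N : ℤ)) N, ((|n| : ℝ) + 1)⁻¹) atTop atTop := by
  refine tendsto_atTop_mono (fun N => ?_) <|
    Real.tendsto_sum_range_one_div_nat_succ_atTop.comp (tendsto_add_atTop_nat 1)
  have himage : (Finset.range (N + 1)).image (Nat.cast : ℕ → ℤ) ⊆ Finset.Icc (-(N : ℤ)) N := by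
    intro n hn
    obtain ⟨i, hi, rfl⟩ := Finset.mem_image.1 hn
    simp only [Finset.mem_range] at hi
    simp only [Finset.mem_Icc]
    omega
  calc ∑ i ∈ Finset.range (N + 1), 1 / ((i : ℝ) + 1)
      = ∑ n ∈ (Finset.range (N + 1)).image (Nat.cast : ℕ → ℤ), ((|n| : ℝ) + 1)⁻¹ := by
        rw [Finset.sum_image fun _ _ _ _ h => Nat.cast_injective h]
        simp
    _ ≤ _ := Finset.sum_le_sum_of_subset_of_nonneg himage fun _ _ _ => by positivity

theorem inv_mul_inv_le_div_sq_add_mul_rpow {a ρ σ σmax α : ℝ} (ha : 0 < a)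
    (hlow : a ^ (-ρ) ≤ σ) (hmax : σ ≤ σmax) (hα : 0 < α) :
    (σmax ^ 2 + α)⁻¹ * a⁻¹ ≤ σ / (σ ^ 2 + α) * a ^ (-(1 - ρ)) := by
  have hσ : 0 < σ := (Real.rpow_pos_of_pos ha _).trans_le hlow
  have hfilter : a ^ (-ρ) / (σmax ^ 2 + α) ≤ σ / (σ ^ 2 + α) :=
    calc a ^ (-ρ) / (σmax ^ 2 + α) ≤ σ / (σmax ^ 2 + α) := by gcongr
      _ ≤ σ / (σ ^ 2 + α) := by gcongr
  calc (σmax ^ 2 + α)⁻¹ * a⁻¹ = a ^ (-ρ) / (σmax ^ 2 + α) * a ^ (-(1 - ρ)) := by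
        rw [div_mul_eq_mul_div, ← Real.rpow_add ha, ← Real.rpow_neg_one a]
        ring_nf
    _ ≤ σ / (σ ^ 2 + α) * a ^ (-(1 - ρ)) := by gcongr

section EssSup

variable {X E : Type*} [TopologicalSpace X] [MeasurableSpace X] {μ : Measure X}
  [μ.IsOpenPosMeasure] [NormedAddCommGroup E]

theorem Continuous.enorm_le_eLpNorm_top {f : X → E} (hf : Continuous f) (x : X) :
    ‖f x‖ₑ ≤ eLpNorm f ∞ μ := by
  rw [eLpNorm_exponent_top]
  have hclosed : IsClosed {y | ‖f y‖ₑ ≤ eLpNormEssSup f μ} := isClosed_le hf.enorm continuous_const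
  have hdense : Dense {y | ‖f y‖ₑ ≤ eLpNormEssSup f μ} := μ.dense_of_ae ae_le_eLpNormEssSup
  exact Set.eq_univ_iff_forall.1 (hclosed.closure_eq.symm.trans hdense.closure_eq) x

theorem exists_lt_eLpNorm_top_of_tendsto_norm {ι : Type*} {l : Filter ι} [l.NeBot]
    {g : ι → X → E} (hg : ∀ i, Continuous (g i)) (x₀ : X)
    (htendsto : Tendsto (fun i => ‖g i x₀‖) l atTop) {C : ℝ≥0∞} (hC : C ≠ ∞) :
    ∃ i, C < eLpNorm (g i) ∞ μ := by
  obtain ⟨i, hi⟩ := (htendsto.eventually_gt_atTop C.toReal).exists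
  refine ⟨i, lt_of_lt_of_le ?_ ((hg i).enorm_le_eLpNorm_top x₀)⟩
  rw [← ofReal_norm, ← ENNReal.ofReal_toReal hC]
  exact (ENNReal.ofReal_lt_ofReal_iff_of_nonneg ENNReal.toReal_nonneg).2 hi

end EssSup

theorem not_exists_eLpNorm_le_mul_norm {X E F ι : Type*} [MeasurableSpace X] {μ : Measure X}
    [NormedAddCommGroup E] [NormedAddCommGroup F] {p : ℝ≥0∞} (T : E → X → F) {r : ι → E}
    (hr : ∃ M, ∀ i, ‖r i‖ ≤ M) {g : ι → X → F} (hT : ∀ i, T (r i) =ᵐ[μ] g i)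
    (hg : ∀ C : ℝ≥0∞, C ≠ ∞ → ∃ i, C < eLpNorm (g i) p μ) :
    ¬ ∃ Cb : ℝ, ∀ y, eLpNorm (T y) p μ ≤ ENNReal.ofReal (Cb * ‖y‖) := by
  rintro ⟨Cb, hCb⟩
  obtain ⟨M, hM⟩ := hr
  obtain ⟨i, hi⟩ := hg (ENNReal.ofReal (|Cb| * M)) ENNReal.ofReal_ne_top
  have hbound : Cb * ‖r i‖ ≤ |Cb| * M :=
    (mul_le_mul_of_nonneg_right (le_abs_self _) (norm_nonneg _)).trans
      (mul_le_mul_of_nonneg_left (hM i) (abs_nonneg _))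
  refine hi.not_ge ?_
  calc eLpNorm (g i) p μ = eLpNorm (T (r i)) p μ := (eLpNorm_congr_ae (hT i)).symm
    _ ≤ ENNReal.ofReal (Cb * ‖r i‖) := hCb (r i)
    _ ≤ ENNReal.ofReal (|Cb| * M) := ENNReal.ofReal_le_ofReal hbound

theorem stmt19_general
    (ρ : ℝ) (hρ : ρ < 1 / 2)
    (khat : ℤ → ℂ)
    (hlow : ∀ n : ℤ, ((|n| : ℝ) + 1) ^ (-ρ) ≤ ‖khat n‖)
    (σmax : ℝ) (hmax : ∀ n : ℤ, ‖khat n‖ ≤ σmax)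
    (α : ℝ) (hα : 0 < α)
    (u : ℤ → Lp ℂ 2 (haarAddCircle (T := 1))) (hu : Orthonormal ℂ u)
    (r : ℕ → Lp ℂ 2 (haarAddCircle (T := 1)))
    (hr : ∀ N : ℕ, r N = ∑ n ∈ Finset.Icc (-(N : ℤ)) (N : ℤ),
      ((((|n| : ℝ) + 1) ^ (-(1 - ρ)) : ℝ) : ℂ) • u n)
    (g : ℕ → AddCircle (1 : ℝ) → ℂ)
    (hg : ∀ N : ℕ, g N = fun x => ∑ n ∈ Finset.Icc (-(N : ℤ)) (N : ℤ),
      (((‖khat n‖ / (‖khat n‖ ^ 2 + α) *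
          ((|n| : ℝ) + 1) ^ (-(1 - ρ)) : ℝ)) : ℂ) * fourier n x) :
    -- the r_N are uniformly bounded in L²(𝕋)
    (∃ Mb : ℝ, ∀ N, ‖r N‖ ≤ Mb) ∧
    -- adversarial artifact at 0
    (∀ N : ℕ, (σmax ^ 2 + α)⁻¹ *
        ∑ n ∈ Finset.Icc (-(N : ℤ)) (N : ℤ), ((|n| : ℝ) + 1)⁻¹ ≤ (g N 0).re) ∧
    -- the harmonic lower bound diverges
    Filter.Tendsto
      (fun N : ℕ => ∑ n ∈ Finset.Icc (-(N : ℤ)) (N : ℤ), ((|n| : ℝ) + 1)⁻¹)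
      Filter.atTop Filter.atTop ∧
    -- hence the L^∞ norms of the reconstructions g_N blow up
    (∀ C : ℝ≥0∞, C ≠ ⊤ → ∃ N, C < eLpNorm (g N) ⊤ (haarAddCircle (T := 1))) ∧
    -- and the Tikhonov regularizer is not bounded from L²(𝕋) to L^∞(𝕋)
    (∀ T : Lp ℂ 2 (haarAddCircle (T := 1)) → AddCircle (1 : ℝ) → ℂ,
      (∀ N, T (r N) =ᵐ[haarAddCircle (T := 1)] g N) →
      ¬ ∃ Cb : ℝ, ∀ y, eLpNorm (T y) ⊤ (haarAddCircle (T := 1)) ≤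
          ENNReal.ofReal (Cb * ‖y‖)) := by
  have hr_bdd : ∃ Mb : ℝ, ∀ N, ‖r N‖ ≤ Mb :=
    ⟨_, fun N => hr N ▸ hu.norm_sum_ofReal_smul_le
      (summable_abs_add_one_rpow_neg_sq (by linarith : 1 / 2 < 1 - ρ)) _⟩
  have hg_zero : ∀ N : ℕ, (σmax ^ 2 + α)⁻¹ *
      ∑ n ∈ Finset.Icc (-(N : ℤ)) (N : ℤ), ((|n| : ℝ) + 1)⁻¹ ≤ (g N 0).re := fun N => by
    simp only [hg, fourier_eval_zero, mul_one, Complex.re_sum, Complex.ofReal_re, Finset.mul_sum]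
    exact Finset.sum_le_sum fun n _ =>
      inv_mul_inv_le_div_sq_add_mul_rpow (by positivity) (hlow n) (hmax n) hα
  have hden : 0 < σmax ^ 2 + α := by positivity
  have hblowup : ∀ C : ℝ≥0∞, C ≠ ⊤ → ∃ N, C < eLpNorm (g N) ⊤ (haarAddCircle (T := 1)) :=
    fun C => exists_lt_eLpNorm_top_of_tendsto_norm (fun N => by rw [hg]; fun_prop) 0 <|
      tendsto_atTop_mono (fun N => (hg_zero N).trans (Complex.re_le_norm _))
        (tendsto_sum_Icc_inv_abs_add_one_atTop.const_mul_atTop (inv_pos.2 hden))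
  exact ⟨hr_bdd, hg_zero, tendsto_sum_Icc_inv_abs_add_one_atTop, hblowup,
    fun T hT => not_exists_eLpNorm_le_mul_norm T hr_bdd hT hblowup⟩

/-- for a periodic convolution kernel with Fourier coefficients
`|k̂[n]| ≥ (|n|+1)^{-ρ}` (`0 < ρ < 1/2`) and `σ_n = |k̂[n]| ≤ σ_max`, the functions
`r_N = Σ_{|n|≤N} (|n|+1)^{-(1-ρ)} u_n` (where `u_n` are the left singular vectors,
orthonormal in `L²(𝕋)`) are uniformly bounded in `L²(𝕋)`, while the Tikhonov
reconstructions `g_N = T^{Tikh}_α r_N = Σ_{|n|≤N} (σ_n/(σ_n²+α))(|n|+1)^{-(1-ρ)} e^{2πin·}`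
satisfy `(g_N)(0) ≥ (σ_max²+α)^{-1} Σ_{|n|≤N} (|n|+1)^{-1} → ∞`; hence their `L^∞`
norms blow up and `T^{Tikh}_α` is not bounded from `L²(𝕋)` to `L^∞(𝕋)`. -/
theorem stmt19
    (ρ : ℝ) (hρ0 : 0 < ρ) (hρ : ρ < 1 / 2)
    (khat : ℤ → ℂ) (hk : ∀ n, khat n ≠ 0)
    (hlow : ∀ n : ℤ, ((|n| : ℝ) + 1) ^ (-ρ) ≤ ‖khat n‖)
    (σmax : ℝ) (hmax : ∀ n : ℤ, ‖khat n‖ ≤ σmax)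
    (α : ℝ) (hα : 0 < α)
    (u : ℤ → Lp ℂ 2 (haarAddCircle (T := 1))) (hu : Orthonormal ℂ u)
    (r : ℕ → Lp ℂ 2 (haarAddCircle (T := 1)))
    (hr : ∀ N : ℕ, r N = ∑ n ∈ Finset.Icc (-(N : ℤ)) (N : ℤ),
      ((((|n| : ℝ) + 1) ^ (-(1 - ρ)) : ℝ) : ℂ) • u n)
    (g : ℕ → AddCircle (1 : ℝ) → ℂ)
    (hg : ∀ N : ℕ, g N = fun x => ∑ n ∈ Finset.Icc (-(N : ℤ)) (N : ℤ),
      (((‖khat n‖ / (‖khat n‖ ^ 2 + α) *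
          ((|n| : ℝ) + 1) ^ (-(1 - ρ)) : ℝ)) : ℂ) * fourier n x) :
    -- the r_N are uniformly bounded in L²(𝕋)
    (∃ Mb : ℝ, ∀ N, ‖r N‖ ≤ Mb) ∧
    -- adversarial artifact at 0
    (∀ N : ℕ, (σmax ^ 2 + α)⁻¹ *
        ∑ n ∈ Finset.Icc (-(N : ℤ)) (N : ℤ), ((|n| : ℝ) + 1)⁻¹ ≤ (g N 0).re) ∧
    -- the harmonic lower bound diverges
    Filter.Tendsto
      (fun N : ℕ => ∑ n ∈ Finset.Icc (-(N : ℤ)) (N : ℤ), ((|n| : ℝ) + 1)⁻¹)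
      Filter.atTop Filter.atTop ∧
    -- hence the L^∞ norms of the reconstructions g_N blow up
    (∀ C : ℝ≥0∞, C ≠ ⊤ → ∃ N, C < eLpNorm (g N) ⊤ (haarAddCircle (T := 1))) ∧
    -- and the Tikhonov regularizer is not bounded from L²(𝕋) to L^∞(𝕋)
    (∀ T : Lp ℂ 2 (haarAddCircle (T := 1)) → AddCircle (1 : ℝ) → ℂ,
      (∀ N, T (r N) =ᵐ[haarAddCircle (T := 1)] g N) →
      ¬ ∃ Cb : ℝ, ∀ y, eLpNorm (T y) ⊤ (haarAddCircle (T := 1)) ≤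
          ENNReal.ofReal (Cb * ‖y‖)) :=
  stmt19_general ρ hρ khat hlow σmax hmax α hα u hu r hr g hg
end
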